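/- arXiv:2203.03687 — 2 statements merged into one kernel-verified Lean document; each statement's English description precedes it below -/
import Mathlib

section
/- Let 𝔖 be a set association scheme on Ω = [d] with d ≥ 2, and let m ≥ 2. Then the association scheme [m]^𝔖 is schurian if and only if 𝔖 is schurian. -/
/-!
An automorphism `g` of `[m]^𝔖` fixes every relation `R_α`, and all subsets in a cell of `𝔖`
have the same size, so `g` preserves Hamming distance on `[m]^d`. For `m ≥ 2` a Hamming
isometry permutes coordinates: it maps edges in direction `i` to edges in a single direction
`π i`, because in a square of edges whose diagonals have length two, opposite sides stay
parallel; induction on the distance then gives `diffSet (g u, g v) = π '' diffSet (u, v)`.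
Hence `π ∈ Aut 𝔖`, and transitivity of `Aut [m]^𝔖` on each `R_α` yields transitivity of
`Aut 𝔖` on each cell `α`. Conversely, `π ∈ Aut 𝔖` combined with coordinatewise permutations
of `[m]` (an element of `Sym(m) ≀ Sym(d)`) maps any pair `(u, v)` with `diffSet (u, v) = a`
to any pair `(u', v')` with `diffSet (u', v') = π '' a`.
-/

namespace Paper


def diag (V : Type*) : Set (V × V) := {p | p.1 = p.2}

def IsCoherent {V : Type*} (X : Set (Set (V × V))) : Prop :=
  ∀ R ∈ X, ∀ S ∈ X, ∀ T ∈ X, ∃ p : ℕ, ∀ q : V × V, q ∈ R →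
    {w : V | (q.1, w) ∈ S ∧ (w, q.2) ∈ T}.ncard = p

def IsAssocScheme {V : Type*} (X : Set (Set (V × V))) : Prop :=
  Setoid.IsPartition X ∧ diag V ∈ X ∧
  (∀ R ∈ X, ∀ x y : V, (x, y) ∈ R → (y, x) ∈ R) ∧ IsCoherent X

def cellGraph {V : Type*} (R : Set (V × V)) : SimpleGraph V :=
  SimpleGraph.fromRel (fun x y => (x, y) ∈ R)

def IsPrimitiveScheme {V : Type*} (X : Set (Set (V × V))) : Prop :=
  ∀ R ∈ X, R ≠ diag V → (cellGraph R).Connected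

def schemeAut {V : Type*} (X : Set (Set (V × V))) : Subgroup (Equiv.Perm V) where
  carrier := {g | ∀ R ∈ X, ∀ x y : V, (x, y) ∈ R ↔ (g x, g y) ∈ R}
  one_mem' := by intro R _ x y; simp
  mul_mem' := by
    intro g h hg hh R hR x y
    have := (hh R hR x y).trans (hg R hR (h x) (h y))
    simpa using this
  inv_mem' := by
    intro g hg R hR x y
    have := (hg R hR (g⁻¹ x) (g⁻¹ y)).symm
    simpa using this

def IsTriangle {Ω : Type*} (a b c : Set Ω) : Prop :=
  a ⊆ b ∪ c ∧ b ⊆ a ∪ c ∧ c ⊆ a ∪ b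

noncomputable def tripleType {Ω : Type*} (a b c : Set Ω) : ℕ × ℕ × ℕ × ℕ × ℕ × ℕ × ℕ :=
  (a.ncard, b.ncard, c.ncard, (a ∩ b).ncard, (a ∩ c).ncard, (b ∩ c).ncard, (a ∩ b ∩ c).ncard)

noncomputable def typeCount {Ω : Type*} (β γ : Set (Set Ω)) (a : Set Ω) (τ : ℕ × ℕ × ℕ × ℕ × ℕ × ℕ × ℕ) : ℕ :=
  {p : Set Ω × Set Ω | p.1 ∈ β ∧ p.2 ∈ γ ∧ tripleType a p.1 p.2 = τ}.ncard

def IsSAS {Ω : Type*} (S : Set (Set (Set Ω))) : Prop :=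
  Setoid.IsPartition S ∧
  (∀ α ∈ S, ∀ a ∈ α, ∀ a' ∈ α, Set.ncard a = Set.ncard a') ∧
  (∀ α ∈ S, ∀ β ∈ S, ∀ γ ∈ S, ∀ a ∈ α, ∀ a' ∈ α,
    ∀ t₁ t₂ t₃ : Set Ω, IsTriangle t₁ t₂ t₃ →
      typeCount β γ a (tripleType t₁ t₂ t₃) = typeCount β γ a' (tripleType t₁ t₂ t₃))

def SetHomog {Ω : Type*} (S : Set (Set (Set Ω))) : Prop :=
  {a : Set Ω | ∃ v : Ω, a = {v}} ∈ S

def setAutGroup {Ω : Type*} (S : Set (Set (Set Ω))) : Subgroup (Equiv.Perm Ω) where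
  carrier := {π | ∀ α ∈ S, ∀ a : Set Ω, a ∈ α ↔ ⇑π '' a ∈ α}
  one_mem' := by intro α hα a; simp
  mul_mem' := by
    intro g h hg hh α hα a
    have h1 : ⇑(g * h) '' a = ⇑g '' (⇑h '' a) := by
      rw [Equiv.Perm.coe_mul, Set.image_comp]
    rw [h1]
    exact (hh α hα a).trans (hg α hα (⇑h '' a))
  inv_mem' := by
    intro g hg α hα a
    have h0 := hg α hα (⇑g⁻¹ '' a)
    have h2 : ⇑g '' (⇑g⁻¹ '' a) = a := by
      simp [← Set.image_comp]
    rw [h2] at h0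
    exact h0.symm

def SetSchurian {Ω : Type*} (S : Set (Set (Set Ω))) : Prop :=
  S = Set.range (fun a : Set Ω => {b : Set Ω | ∃ π ∈ setAutGroup S, b = ⇑π '' a})

def diffSet {m d : ℕ} (p : (Fin d → Fin m) × (Fin d → Fin m)) : Set (Fin d) :=
  {i | p.1 i ≠ p.2 i}

def relOf (m d : ℕ) (α : Set (Set (Fin d))) : Set ((Fin d → Fin m) × (Fin d → Fin m)) :=
  {p | diffSet p ∈ α}

def mPow (m d : ℕ) (S : Set (Set (Set (Fin d)))) :
    Set (Set ((Fin d → Fin m) × (Fin d → Fin m))) :=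
  {R | R.Nonempty ∧ ∃ α ∈ S, R = relOf m d α}

def tensorTrivial (m d : ℕ) : Set (Set ((Fin d → Fin m) × (Fin d → Fin m))) :=
  {R | R.Nonempty ∧ ∃ a : Set (Fin d), R = {p | diffSet p = a}}

def hammingScheme (m d : ℕ) : Set (Set ((Fin d → Fin m) × (Fin d → Fin m))) :=
  {R | R.Nonempty ∧ ∃ t : ℕ, R = {p | (diffSet p).ncard = t}}

def Refines {W : Type*} (X X' : Set (Set W)) : Prop :=
  ∀ R ∈ X, ∃ R' ∈ X', R ⊆ R'

def SchemeSchurian {V : Type*} (X : Set (Set (V × V))) : Prop :=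
  X = Set.range (fun p : V × V => {q : V × V | ∃ g ∈ schemeAut X, q = (g p.1, g p.2)})

open Function Pointwise

section Orbits

theorem eq_range_orbit_iff {G X : Type*} [Group G] [MulAction G X] (H : Subgroup G)
    {S : Set (Set X)} (hne : ∅ ∉ S) (hcover : ∀ x, ∃ α ∈ S, x ∈ α)
    (hH : ∀ g ∈ H, ∀ α ∈ S, ∀ x, x ∈ α ↔ g • x ∈ α) :
    S = Set.range (fun x => {y | ∃ g ∈ H, y = g • x}) ↔
      ∀ α ∈ S, ∀ x ∈ α, ∀ y ∈ α, ∃ g ∈ H, y = g • x := by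
  constructor
  · rintro rfl _ ⟨z, rfl⟩ _ ⟨g, hg, rfl⟩ _ ⟨h, hh, rfl⟩
    exact ⟨h * g⁻¹, mul_mem hh (inv_mem hg), by rw [mul_smul, inv_smul_smul]⟩
  · intro htrans
    have orbit_eq : ∀ α ∈ S, ∀ x ∈ α, {y | ∃ g ∈ H, y = g • x} = α := fun α hα x hx =>
      Set.ext fun y => ⟨by rintro ⟨g, hg, rfl⟩; exact (hH g hg α hα x).mp hx, htrans α hα x hx y⟩
    ext α
    constructor
    · intro hα
      obtain ⟨x, hx⟩ := Set.nonempty_iff_ne_empty.mpr fun h => hne (h ▸ hα)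
      exact ⟨x, orbit_eq α hα x hx⟩
    · rintro ⟨x, rfl⟩
      obtain ⟨α, hα, hx⟩ := hcover x
      beta_reduce
      rwa [orbit_eq α hα x hx]

lemma mem_setAutGroup {Ω : Type*} {S : Set (Set (Set Ω))} {π : Equiv.Perm Ω} :
    π ∈ setAutGroup S ↔ ∀ α ∈ S, ∀ a : Set Ω, a ∈ α ↔ ⇑π '' a ∈ α := Iff.rfl

lemma mem_schemeAut {V : Type*} {X : Set (Set (V × V))} {g : Equiv.Perm V} :
    g ∈ schemeAut X ↔ ∀ R ∈ X, ∀ x y : V, (x, y) ∈ R ↔ (g x, g y) ∈ R := Iff.rfl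

-- `Equiv.Perm Ω` acts on `Set Ω` pointwise: `π • a = ⇑π '' a`.
lemma setSchurian_iff {Ω : Type*} {S : Set (Set (Set Ω))} (hne : ∅ ∉ S)
    (hcover : ∀ a, ∃ α ∈ S, a ∈ α) :
    SetSchurian S ↔ ∀ α ∈ S, ∀ a ∈ α, ∀ b ∈ α, ∃ π ∈ setAutGroup S, b = ⇑π '' a :=
  eq_range_orbit_iff (setAutGroup S) hne hcover fun _ hπ => mem_setAutGroup.mp hπ

lemma schemeSchurian_iff {V : Type*} {X : Set (Set (V × V))} (hne : ∅ ∉ X)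
    (hcover : ∀ p, ∃ R ∈ X, p ∈ R) :
    SchemeSchurian X ↔ ∀ R ∈ X, ∀ p ∈ R, ∀ q ∈ R, ∃ g ∈ schemeAut X, q = (g p.1, g p.2) :=
  eq_range_orbit_iff (schemeAut X) hne hcover fun _ hg R hR p => mem_schemeAut.mp hg R hR p.1 p.2

end Orbits

section Hamming

variable {m d : ℕ}

lemma mem_diffSet {u v : Fin d → Fin m} {i : Fin d} : i ∈ diffSet (u, v) ↔ u i ≠ v i := Iff.rfl

lemma diffSet_comm (u v : Fin d → Fin m) : diffSet (u, v) = diffSet (v, u) :=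
  Set.ext fun _ => ne_comm

lemma diffSet_subset_union (u v w : Fin d → Fin m) :
    diffSet (u, w) ⊆ diffSet (u, v) ∪ diffSet (v, w) := by
  intro i hi
  by_contra h
  simp only [Set.mem_union, mem_diffSet, not_or, not_not] at h
  exact hi (h.1.trans h.2)

lemma diffSet_eq_empty_iff {u v : Fin d → Fin m} : diffSet (u, v) = ∅ ↔ u = v := by
  simp [Set.eq_empty_iff_forall_notMem, mem_diffSet, funext_iff]

lemma diffSet_update_right {u : Fin d → Fin m} {i : Fin d} {c : Fin m} (hc : u i ≠ c) :
    diffSet (u, update u i c) = {i} := by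
  ext j
  rcases eq_or_ne j i with rfl | hj <;> simp [mem_diffSet, *]

lemma diffSet_update_update (u v : Fin d → Fin m) (i : Fin d) (c : Fin m) :
    diffSet (update u i c, update v i c) = diffSet (u, v) \ {i} := by
  ext j
  rcases eq_or_ne j i with rfl | hj <;> simp [mem_diffSet, *]

lemma diffSet_update_left (u v : Fin d → Fin m) (i : Fin d) :
    diffSet (update u i (v i), v) = diffSet (u, v) \ {i} := by
  simpa using diffSet_update_update u v i (v i)

theorem diffSet_induction {P : (Fin d → Fin m) → (Fin d → Fin m) → Prop} (refl : ∀ u, P u u)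
    (step : ∀ u v k, k ∈ diffSet (u, v) → P (update u k (v k)) v → P u v)
    (u v : Fin d → Fin m) : P u v := by
  obtain ⟨n, hn⟩ : ∃ n, (diffSet (u, v)).ncard = n := ⟨_, rfl⟩
  induction n generalizing u with
  | zero =>
    rw [Set.ncard_eq_zero (Set.toFinite _), diffSet_eq_empty_iff] at hn
    exact hn ▸ refl u
  | succ n ih =>
    obtain ⟨k, hk⟩ := Set.nonempty_of_ncard_ne_zero (s := diffSet (u, v)) (by omega)
    refine step u v k hk (ih _ ?_)
    rw [diffSet_update_left, Set.ncard_sdiff_singleton_of_mem hk, hn, Nat.add_sub_cancel]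

lemma diffSet_eq_pair {x y z : Fin d → Fin m} {a b : Fin d} (hy : diffSet (x, y) = {a})
    (hz : diffSet (x, z) = {b}) (hab : a ≠ b) : diffSet (y, z) = {a, b} := by
  ext j
  have hyj := Set.ext_iff.mp hy j
  have hzj := Set.ext_iff.mp hz j
  simp only [mem_diffSet, Set.mem_singleton_iff, Set.mem_insert_iff] at hyj hzj ⊢
  grind

lemma ncard_diffSet_le_one {x y z : Fin d → Fin m} {a : Fin d} (hy : diffSet (x, y) = {a})
    (hz : diffSet (x, z) = {a}) : (diffSet (y, z)).ncard ≤ 1 := by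
  have h := diffSet_subset_union y x z
  rw [diffSet_comm y x, hy, hz, Set.union_self] at h
  simpa using Set.ncard_le_ncard h

lemma ne_of_ncard_diffSet_eq_two {x y z : Fin d → Fin m} {a b : Fin d}
    (hy : diffSet (x, y) = {a}) (hz : diffSet (x, z) = {b}) (h : (diffSet (y, z)).ncard = 2) :
    a ≠ b := by
  rintro rfl
  have := ncard_diffSet_le_one hy hz
  omega

lemma eq_of_diffSet_square {x y z t : Fin d → Fin m} {a a' b b' : Fin d}
    (hxy : diffSet (x, y) = {a}) (hxz : diffSet (x, z) = {b})
    (hyt : diffSet (y, t) = {b'}) (hzt : diffSet (z, t) = {a'})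
    (hxt : (diffSet (x, t)).ncard = 2) (hyz : (diffSet (y, z)).ncard = 2) : a = a' := by
  have hab' : a ≠ b' := ne_of_ncard_diffSet_eq_two (x := y) (by rwa [diffSet_comm]) hyt hxt
  have ha : a ∈ diffSet (y, z) := by
    rw [diffSet_eq_pair hxy hxz (ne_of_ncard_diffSet_eq_two hxy hxz hyz)]
    exact Set.mem_insert a _
  have h := diffSet_subset_union y t z
  rw [hyt, diffSet_comm t z, hzt] at h
  rcases h ha with h | h
  · exact absurd h hab'
  · exact h

def IsHammingIsometry (G : (Fin d → Fin m) → (Fin d → Fin m)) : Prop :=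
  ∀ u v, (diffSet (G u, G v)).ncard = (diffSet (u, v)).ncard

namespace IsHammingIsometry

variable {G : (Fin d → Fin m) → (Fin d → Fin m)}

lemma exists_diffSet_eq_singleton (hG : IsHammingIsometry G) {u v : Fin d → Fin m} {i : Fin d}
    (h : diffSet (u, v) = {i}) : ∃ j, diffSet (G u, G v) = {j} :=
  Set.ncard_eq_one.mp (by rw [hG, h, Set.ncard_singleton])

lemma diffSet_eq_of_common_source (hG : IsHammingIsometry G) {u v v' : Fin d → Fin m}
    {i : Fin d} (hv : diffSet (u, v) = {i}) (hv' : diffSet (u, v') = {i}) :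
    diffSet (G u, G v) = diffSet (G u, G v') := by
  obtain ⟨a, ha⟩ := hG.exists_diffSet_eq_singleton hv
  obtain ⟨a', ha'⟩ := hG.exists_diffSet_eq_singleton hv'
  rw [ha, ha']
  by_contra hne
  have hle := ncard_diffSet_le_one hv hv'
  have hne' : a ≠ a' := fun h => hne (h ▸ rfl)
  rw [← hG, diffSet_eq_pair ha ha' hne', Set.ncard_pair hne'] at hle
  omega

lemma exists_parallel_edge (hG : IsHammingIsometry G) {u v w : Fin d → Fin m} {i k : Fin d}
    (hv : diffSet (u, v) = {i}) (hw : diffSet (u, w) = {k}) :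
    ∃ w', diffSet (w, w') = {i} ∧ diffSet (G u, G v) = diffSet (G w, G w') := by
  rcases eq_or_ne k i with rfl | hki
  · exact ⟨u, by rwa [diffSet_comm], by rw [hG.diffSet_eq_of_common_source hv hw, diffSet_comm]⟩
  have hvw : diffSet (v, w) = {i, k} := diffSet_eq_pair hv hw hki.symm
  set w' := update w i (v i)
  have hww' : diffSet (w, w') = {i} :=
    diffSet_update_right (Ne.symm (hvw ▸ Set.mem_insert i _ : i ∈ diffSet (v, w)))
  have hvw' : diffSet (v, w') = {k} := by
    have h := diffSet_update_update v w i (v i)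
    rwa [update_eq_self, hvw, Set.insert_sdiff_of_mem _ (Set.mem_singleton i),
      Set.sdiff_singleton_eq_self (by simpa using hki.symm)] at h
  have huw' : diffSet (u, w') = {k, i} := diffSet_eq_pair (by rwa [diffSet_comm]) hww' hki
  obtain ⟨a, ha⟩ := hG.exists_diffSet_eq_singleton hv
  obtain ⟨a', ha'⟩ := hG.exists_diffSet_eq_singleton hww'
  obtain ⟨b, hb⟩ := hG.exists_diffSet_eq_singleton hw
  obtain ⟨b', hb'⟩ := hG.exists_diffSet_eq_singleton hvw'
  have h := eq_of_diffSet_square ha hb hb' ha'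
    (by rw [hG, huw', Set.ncard_pair hki]) (by rw [hG, hvw, Set.ncard_pair hki.symm])
  exact ⟨w', hww', by rw [ha, ha', h]⟩

theorem diffSet_eq_of_parallel (hG : IsHammingIsometry G) {u v u' v' : Fin d → Fin m}
    {i : Fin d} (hv : diffSet (u, v) = {i}) (hv' : diffSet (u', v') = {i}) :
    diffSet (G u, G v) = diffSet (G u', G v') := by
  induction u, u' using diffSet_induction generalizing v v' with
  | refl u => exact hG.diffSet_eq_of_common_source hv hv'
  | step u u' k hk ih =>
    obtain ⟨w', hw', h⟩ := hG.exists_parallel_edge hv (diffSet_update_right hk)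
    exact h.trans (ih hw' hv')

lemma diffSet_eq_image (hG : IsHammingIsometry G) {p : Fin d → Fin d} (hp : Injective p)
    (hdir : ∀ {u v i}, diffSet (u, v) = {i} → diffSet (G u, G v) = {p i})
    (u v : Fin d → Fin m) : diffSet (G u, G v) = p '' diffSet (u, v) := by
  induction u, v using diffSet_induction with
  | refl u => rw [diffSet_eq_empty_iff.mpr rfl, diffSet_eq_empty_iff.mpr rfl, Set.image_empty]
  | step u v k hk ih =>
    refine Set.eq_of_subset_of_ncard_le ?_
      (by rw [Set.ncard_image_of_injective _ hp, hG]) (Set.toFinite _)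
    calc diffSet (G u, G v)
        ⊆ diffSet (G u, G (update u k (v k))) ∪ diffSet (G (update u k (v k)), G v) :=
          diffSet_subset_union _ _ _
      _ = p '' ({k} ∪ diffSet (u, v) \ {k}) := by
          rw [hdir (diffSet_update_right hk), ih, diffSet_update_left, Set.image_union,
            Set.image_singleton]
      _ = p '' diffSet (u, v) := by
          rw [Set.union_sdiff_self, Set.singleton_union, Set.insert_eq_of_mem hk]

theorem exists_perm (hm : 2 ≤ m) (hG : IsHammingIsometry G) :
    ∃ π : Equiv.Perm (Fin d), ∀ u v, diffSet (G u, G v) = ⇑π '' diffSet (u, v) := by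
  obtain ⟨x, y, hxy⟩ : ∃ x y : Fin m, x ≠ y :=
    ⟨⟨0, by omega⟩, ⟨1, by omega⟩, by simp [Fin.ext_iff]⟩
  have hedge : ∀ i, diffSet (fun _ : Fin d => x, update (fun _ => x) i y) = {i} :=
    fun _ => diffSet_update_right hxy
  choose p hp using fun i => hG.exists_diffSet_eq_singleton (hedge i)
  have hinj : Injective p := by
    intro i j hij
    by_contra hne
    refine ne_of_ncard_diffSet_eq_two (hp i) (hp j) ?_ hij
    rw [hG, diffSet_eq_pair (hedge i) (hedge j) hne, Set.ncard_pair hne]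
  refine ⟨Equiv.ofBijective p (Finite.injective_iff_bijective.mp hinj), ?_⟩
  exact hG.diffSet_eq_image hinj fun h => (hG.diffSet_eq_of_parallel h (hedge _)).trans (hp _)

end IsHammingIsometry

end Hamming

section Power

variable {m d : ℕ} {S : Set (Set (Set (Fin d)))}

lemma exists_diffSet_eq (hm : 2 ≤ m) (a : Set (Fin d)) :
    ∃ p : (Fin d → Fin m) × (Fin d → Fin m), diffSet p = a := by
  classical
  refine ⟨(fun _ => ⟨0, by omega⟩, fun i => if i ∈ a then ⟨1, by omega⟩ else ⟨0, by omega⟩), ?_⟩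
  ext i
  by_cases hi : i ∈ a <;> simp [diffSet, hi, Fin.ext_iff]

lemma relOf_mem_mPow (hm : 2 ≤ m) (hne : ∅ ∉ S) {α : Set (Set (Fin d))} (hα : α ∈ S) :
    relOf m d α ∈ mPow m d S := by
  obtain ⟨a, ha⟩ := Set.nonempty_iff_ne_empty.mpr fun h => hne (h ▸ hα)
  obtain ⟨p, rfl⟩ := exists_diffSet_eq hm a
  exact ⟨⟨p, ha⟩, α, hα, rfl⟩

lemma empty_notMem_mPow : ∅ ∉ mPow m d S := fun h => Set.not_nonempty_empty h.1

lemma exists_mem_mPow (hcover : ∀ a, ∃ α ∈ S, a ∈ α) (p : (Fin d → Fin m) × (Fin d → Fin m)) :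
    ∃ R ∈ mPow m d S, p ∈ R := by
  obtain ⟨α, hα, hp⟩ := hcover (diffSet p)
  exact ⟨relOf m d α, ⟨⟨p, hp⟩, α, hα, rfl⟩, hp⟩

lemma exists_mem_setAutGroup_of_mem_schemeAut (hm : 2 ≤ m) (hne : ∅ ∉ S)
    (hcover : ∀ a, ∃ α ∈ S, a ∈ α) (hcard : ∀ α ∈ S, ∀ a ∈ α, ∀ a' ∈ α, a.ncard = a'.ncard)
    {g : Equiv.Perm (Fin d → Fin m)} (hg : g ∈ schemeAut (mPow m d S)) :
    ∃ π ∈ setAutGroup S, ∀ u v, diffSet (g u, g v) = ⇑π '' diffSet (u, v) := by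
  have hcell : ∀ α ∈ S, ∀ u v, diffSet (u, v) ∈ α ↔ diffSet (g u, g v) ∈ α :=
    fun α hα => mem_schemeAut.mp hg _ (relOf_mem_mPow hm hne hα)
  have hG : IsHammingIsometry g := by
    intro u v
    obtain ⟨α, hα, huv⟩ := hcover (diffSet (u, v))
    exact hcard α hα _ ((hcell α hα u v).mp huv) _ huv
  obtain ⟨π, hπ⟩ := hG.exists_perm hm
  refine ⟨π, fun α hα a => ?_, hπ⟩
  obtain ⟨⟨u, v⟩, rfl⟩ := exists_diffSet_eq hm a
  rw [hcell α hα u v, hπ]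

lemma exists_perm_apply_eq_of_iff {α : Type*} [DecidableEq α] {x y x' y' : α}
    (h : x = y ↔ x' = y') : ∃ σ : Equiv.Perm α, σ x = x' ∧ σ y = y' := by
  set τ := Equiv.swap x x'
  refine ⟨τ.trans (Equiv.swap (τ y) y'), ?_, Equiv.swap_apply_left _ _⟩
  change Equiv.swap (τ y) y' (τ x) = x'
  rcases eq_or_ne x y with rfl | hxy
  · rw [Equiv.swap_apply_left]
    exact (h.mp rfl).symm
  · rw [Equiv.swap_apply_left]
    exact Equiv.swap_apply_of_ne_of_ne (fun e => hxy (τ.injective (e ▸ Equiv.swap_apply_left _ _)))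
      fun e => hxy (h.mpr e)

/-- `u ↦ (i ↦ σ i (u (π⁻¹ i)))`, the action of `(σ, π) ∈ Sym(m) ≀ Sym(d)` on `[m]^d`. -/
def wreathPerm (π : Equiv.Perm (Fin d)) (σ : Fin d → Equiv.Perm (Fin m)) :
    Equiv.Perm (Fin d → Fin m) :=
  (π.arrowCongr (Equiv.refl _)).trans (Equiv.piCongrRight σ)

lemma diffSet_wreathPerm (π : Equiv.Perm (Fin d)) (σ : Fin d → Equiv.Perm (Fin m))
    (u v : Fin d → Fin m) :
    diffSet (wreathPerm π σ u, wreathPerm π σ v) = ⇑π '' diffSet (u, v) := by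
  ext i
  simp [wreathPerm, diffSet, Equiv.image_eq_preimage_symm]

lemma exists_mem_schemeAut_of_diffSet_eq_image {π : Equiv.Perm (Fin d)} (hπ : π ∈ setAutGroup S)
    {p q : (Fin d → Fin m) × (Fin d → Fin m)} (h : diffSet q = ⇑π '' diffSet p) :
    ∃ g ∈ schemeAut (mPow m d S), q = (g p.1, g p.2) := by
  have hcoord : ∀ i, p.1 (π.symm i) = p.2 (π.symm i) ↔ q.1 i = q.2 i := fun i => by
    have hi := Set.ext_iff.mp h i
    rw [Equiv.image_eq_preimage_symm] at hi
    exact not_iff_not.mp hi.symm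
  choose σ hσ₁ hσ₂ using fun i => exists_perm_apply_eq_of_iff (hcoord i)
  refine ⟨wreathPerm π σ, ?_, Prod.ext (funext hσ₁).symm (funext hσ₂).symm⟩
  rintro R ⟨-, α, hα, rfl⟩ u v
  change diffSet (u, v) ∈ α ↔ diffSet (wreathPerm π σ u, wreathPerm π σ v) ∈ α
  rw [diffSet_wreathPerm]
  exact mem_setAutGroup.mp hπ α hα _

end Power

theorem stmt8_general (m d : ℕ) (hm : 2 ≤ m)
    (S : Set (Set (Set (Fin d)))) (hS : IsSAS S) :
    SchemeSchurian (mPow m d S) ↔ SetSchurian S := by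
  obtain ⟨⟨hne, hunique⟩, hcard, -⟩ := hS
  have hcover : ∀ a, ∃ α ∈ S, a ∈ α := fun a => (hunique a).exists
  rw [schemeSchurian_iff empty_notMem_mPow (exists_mem_mPow hcover), setSchurian_iff hne hcover]
  constructor
  · intro hX α hα a ha b hb
    obtain ⟨p, rfl⟩ := exists_diffSet_eq hm a
    obtain ⟨q, rfl⟩ := exists_diffSet_eq hm b
    obtain ⟨g, hg, rfl⟩ := hX _ (relOf_mem_mPow hm hne hα) p ha q hb
    obtain ⟨π, hπ, hgπ⟩ := exists_mem_setAutGroup_of_mem_schemeAut hm hne hcover hcard hg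
    exact ⟨π, hπ, hgπ _ _⟩
  · rintro hs R ⟨-, α, hα, rfl⟩ p hp q hq
    obtain ⟨π, hπ, h⟩ := hs α hα _ hp _ hq
    exact exists_mem_schemeAut_of_diffSet_eq_image hπ h

theorem stmt8 (m d : ℕ) (hd : 2 ≤ d) (hm : 2 ≤ m)
    (S : Set (Set (Set (Fin d)))) (hS : IsSAS S) :
    SchemeSchurian (mPow m d S) ↔ SetSchurian S :=
  stmt8_general m d hm S hS

end Paper
end

section
/- Let 𝔖 be a set association scheme of rank r on a finite set Ω and let G be a subgroup of Sym(k), k ≥ 1. Then the wreath product 𝔖 ≀ G is a set association scheme on Ω × [k], and its rank equals the number of orbits of G acting on [r]^k (where G acts on k-tuples by permuting positions). -/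
namespace Paper


def fiber {Ω : Type*} {k : ℕ} (s : Set (Ω × Fin k)) (j : Fin k) : Set Ω := {ω | (ω, j) ∈ s}

def wreath {Ω : Type*} (S : Set (Set (Set Ω))) {k : ℕ} (G : Subgroup (Equiv.Perm (Fin k))) :
    Set (Set (Set (Ω × Fin k))) :=
  {c | ∃ α : Fin k → Set (Set Ω), (∀ j, α j ∈ S) ∧
      c = {s : Set (Ω × Fin k) | ∃ π ∈ G, ∀ j, fiber s j ∈ α (π⁻¹ j)}}

/-!
A subset of `Ω × [k]` is the tuple of its fibers over `[k]`, and cardinalities of sets and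
of their intersections add up over fibers; so the type of a triple is the sum of the types of its
fibers, and a triple is a triangle iff all its fibers are.

Fix cells `A, B, C` of `𝔖 ≀ G` and `a ∈ A`. Sort the pairs `(b, c) ∈ B × C` of type `τ` relative
to `a` by their *profile*: the cells of `𝔖` containing the fibers of `b` and of `c`, and the types
of the fibers of `(a, b, c)`. The profiles that occur do not depend on `a`, and the pairs with a
given profile form a product over `j` of sets counted by `𝔖` relative to the `j`-th fiber of `a`;
by regularity of `𝔖` these counts only depend on the cell of that fiber. Since renumbering the
coordinates by an element of `G` preserves the cells of `𝔖 ≀ G` and all types, any two `a, a' ∈ A`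
may be assumed to have their `j`-th fibers in the same cell of `𝔖` for every `j`.

Finally `𝔖 ≀ G` is a partition whose cells correspond to the `G`-orbits on tuples of cells of `𝔖`,
which gives the rank.
-/

abbrev TripleType := ℕ × ℕ × ℕ × ℕ × ℕ × ℕ × ℕ

def IsCardHomogeneous {Ω : Type*} (S : Set (Set (Set Ω))) : Prop :=
  ∀ α ∈ S, ∀ a ∈ α, ∀ a' ∈ α, a.ncard = a'.ncard

def IsTypeRegular {Ω : Type*} (S : Set (Set (Set Ω))) : Prop :=
  ∀ α ∈ S, ∀ β ∈ S, ∀ γ ∈ S, ∀ a ∈ α, ∀ a' ∈ α,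
    ∀ t₁ t₂ t₃ : Set Ω, IsTriangle t₁ t₂ t₃ →
      typeCount β γ a (tripleType t₁ t₂ t₃) = typeCount β γ a' (tripleType t₁ t₂ t₃)

section Partition

variable {X : Type*} {S : Set (Set X)}

noncomputable def cellOf (hS : Setoid.IsPartition S) (x : X) : Set X := (hS.2 x).choose

lemma cellOf_mem (hS : Setoid.IsPartition S) (x : X) : cellOf hS x ∈ S :=
  (hS.2 x).choose_spec.1.1

lemma mem_cellOf (hS : Setoid.IsPartition S) (x : X) : x ∈ cellOf hS x :=
  (hS.2 x).choose_spec.1.2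

lemma eq_cellOf (hS : Setoid.IsPartition S) {x : X} {α : Set X} (hα : α ∈ S) (hx : x ∈ α) :
    α = cellOf hS x :=
  (hS.2 x).choose_spec.2 α ⟨hα, hx⟩

end Partition

section Counting

lemma ncard_eq_finsum_ncard_inter_preimage {α β : Type*} {s : Set α} (hs : s.Finite)
    (f : α → β) : s.ncard = ∑ᶠ y, (s ∩ f ⁻¹' {y}).ncard := by
  have hsupp : Function.support (fun y => (s ∩ f ⁻¹' {y}).ncard) ⊆ f '' s := by
    intro y hy
    obtain ⟨x, hxs, hxy⟩ := Set.nonempty_of_ncard_ne_zero hy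
    exact ⟨x, hxs, hxy⟩
  rw [← finsum_mem_univ, ← finsum_mem_inter_support_eq' _ (f '' s) Set.univ
      fun y hy => iff_of_true (hsupp hy) trivial,
    ← (hs.image f).ncard_biUnion (fun y _ => hs.subset Set.inter_subset_left)]
  · congr 1
    ext x
    simpa using fun hx => ⟨x, hx, rfl⟩
  · intro y _ y' _ hyy'
    exact Set.disjoint_left.2 fun x hx hx' => hyy' (hx.2.symm.trans hx'.2)

lemma ncard_range_eq_of_eq_iff {α β γ : Type*} {F : α → β} {F' : α → γ}
    (h : ∀ x y, F x = F y ↔ F' x = F' y) : (Set.range F).ncard = (Set.range F').ncard := by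
  rw [← Nat.card_coe_set_eq, ← Nat.card_coe_set_eq]
  exact Nat.card_congr ((Setoid.quotientKerEquivRange F).symm.trans
    ((Quotient.congrRight h).trans (Setoid.quotientKerEquivRange F')))

end Counting

section Triangles

variable {X : Type*}

lemma subset_union_iff_ncard_inter [Finite X] {a b c : Set X} :
    a ⊆ b ∪ c ↔ (a ∩ b).ncard + (a ∩ c).ncard = a.ncard + (a ∩ b ∩ c).ncard := by
  have h := Set.ncard_union_add_ncard_inter (a ∩ b) (a ∩ c)
  rw [← Set.inter_union_distrib_left, ← Set.inter_inter_distrib_left,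
    ← Set.inter_assoc] at h
  rw [← h, ← Set.inter_eq_left]
  constructor
  · intro hsub
    rw [hsub]
  · intro hcard
    exact Set.eq_of_subset_of_ncard_le Set.inter_subset_left (by omega)

lemma isTriangle_iff_ncard [Finite X] {a b c : Set X} :
    IsTriangle a b c ↔ (a ∩ b).ncard + (a ∩ c).ncard = a.ncard + (a ∩ b ∩ c).ncard ∧
      (a ∩ b).ncard + (b ∩ c).ncard = b.ncard + (a ∩ b ∩ c).ncard ∧
      (a ∩ c).ncard + (b ∩ c).ncard = c.ncard + (a ∩ b ∩ c).ncard := by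
  rw [IsTriangle, subset_union_iff_ncard_inter, subset_union_iff_ncard_inter,
    subset_union_iff_ncard_inter, Set.inter_comm b a, Set.inter_comm c a, Set.inter_comm c b,
    Set.inter_right_comm a c b]

lemma IsTriangle.of_tripleType_eq {Y : Type*} [Finite X] [Finite Y] {a b c : Set X}
    {x y z : Set Y} (h : IsTriangle x y z) (he : tripleType a b c = tripleType x y z) :
    IsTriangle a b c := by
  simp only [tripleType, Prod.mk.injEq] at he
  obtain ⟨ha, hb, hc, hab, hac, hbc, habc⟩ := he
  rw [isTriangle_iff_ncard] at h ⊢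
  rwa [ha, hb, hc, hab, hac, hbc, habc]

lemma ncard_preimage_equiv {Y : Type*} (e : X ≃ Y) (s : Set Y) : (e ⁻¹' s).ncard = s.ncard :=
  Set.ncard_preimage_of_injective_subset_range e.injective (by simp)

lemma tripleType_preimage_equiv {Y : Type*} (e : X ≃ Y) (a b c : Set Y) :
    tripleType (e ⁻¹' a) (e ⁻¹' b) (e ⁻¹' c) = tripleType a b c := by
  simp only [tripleType, ← Set.preimage_inter, ncard_preimage_equiv]

lemma typeCount_preimage_equiv (e : X ≃ X) {β γ : Set (Set X)} (hβ : ∀ s, e ⁻¹' s ∈ β ↔ s ∈ β)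
    (hγ : ∀ s, e ⁻¹' s ∈ γ ↔ s ∈ γ) (a : Set X) (τ : TripleType) :
    typeCount β γ (e ⁻¹' a) τ = typeCount β γ a τ := by
  let E : Set X ≃ Set X :=
    ⟨(e ⁻¹' ·), (e.symm ⁻¹' ·), e.symm_preimage_preimage, e.preimage_symm_preimage⟩
  rw [typeCount, typeCount, ← Nat.card_coe_set_eq, ← Nat.card_coe_set_eq]
  refine (Nat.card_congr ((E.prodCongr E).subtypeEquiv fun p => ?_)).symm
  simp only [Set.mem_ofPred_eq, Equiv.prodCongr_apply, Prod.map, E, Equiv.coe_fn_mk, hβ, hγ,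
    tripleType_preimage_equiv]

end Triangles

section Fibers

variable {Ω : Type*} {k : ℕ}

lemma fiber_inter (a b : Set (Ω × Fin k)) (j : Fin k) :
    fiber (a ∩ b) j = fiber a j ∩ fiber b j := rfl

lemma fiber_preimage_prodCongr (ρ : Equiv.Perm (Fin k)) (s : Set (Ω × Fin k)) (j : Fin k) :
    fiber ((Equiv.refl Ω).prodCongr ρ ⁻¹' s) j = fiber s (ρ j) := rfl

def fibersEquiv : Set (Ω × Fin k) ≃ (Fin k → Set Ω) where
  toFun s j := fiber s j
  invFun f := {z | z.1 ∈ f z.2}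
  left_inv _ := rfl
  right_inv _ := rfl

def sigmaFiberEquiv (s : Set (Ω × Fin k)) : s ≃ Σ j, fiber s j where
  toFun z := ⟨z.1.2, z.1.1, z.2⟩
  invFun z := ⟨(z.2.1, z.1), z.2.2⟩
  left_inv _ := rfl
  right_inv _ := rfl

lemma ncard_eq_sum_ncard_fiber [Finite Ω] (s : Set (Ω × Fin k)) :
    s.ncard = ∑ j, (fiber s j).ncard := by
  simp only [← Nat.card_coe_set_eq, Nat.card_congr (sigmaFiberEquiv s), Nat.card_sigma]

lemma tripleType_eq_sum_fiber [Finite Ω] (a b c : Set (Ω × Fin k)) :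
    tripleType a b c = ∑ j, tripleType (fiber a j) (fiber b j) (fiber c j) := by
  simp only [tripleType, Prod.ext_iff, Prod.fst_sum, Prod.snd_sum, ncard_eq_sum_ncard_fiber,
    fiber_inter, and_self]

lemma IsTriangle.fiber {a b c : Set (Ω × Fin k)} (h : IsTriangle a b c) (j : Fin k) :
    IsTriangle (fiber a j) (fiber b j) (fiber c j) :=
  ⟨fun _ hω => h.1 hω, fun _ hω => h.2.1 hω, fun _ hω => h.2.2 hω⟩

lemma exists_forall_fiber_mem {α : Fin k → Set (Set Ω)} (hα : ∀ j, (α j).Nonempty) :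
    ∃ s : Set (Ω × Fin k), ∀ j, fiber s j ∈ α j :=
  ⟨fibersEquiv.symm fun j => (hα j).some, fun j => (hα j).some_mem⟩

lemma ncard_setOf_forall_fiber [Finite Ω] (Q : Fin k → Set Ω × Set Ω → Prop) :
    {p : Set (Ω × Fin k) × Set (Ω × Fin k) | ∀ j, Q j (fiber p.1 j, fiber p.2 j)}.ncard =
      ∏ j, {q | Q j q}.ncard := by
  simp only [← Nat.card_coe_set_eq, ← Nat.card_pi]
  exact Nat.card_congr ((((fibersEquiv.prodCongr fibersEquiv).trans
    (Equiv.arrowProdEquivProdArrow _ _ _).symm).subtypeEquiv fun _ => Iff.rfl).trans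
      Equiv.subtypePiEquivPi)

end Fibers

section Orbits

variable {k : ℕ} (G : Subgroup (Equiv.Perm (Fin k))) {X : Type*}

def permOrbit (f : Fin k → X) : Set (Fin k → X) := {f' | ∃ π ∈ G, ∀ j, f' j = f (π⁻¹ j)}

lemma mem_permOrbit_self (f : Fin k → X) : f ∈ permOrbit G f :=
  ⟨1, one_mem G, fun _ => rfl⟩

lemma permOrbit_eq_of_mem {f g : Fin k → X} (h : g ∈ permOrbit G f) :
    permOrbit G g = permOrbit G f := by
  obtain ⟨π, hπ, hg⟩ := h
  ext f'
  constructor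
  · rintro ⟨ρ, hρ, hf'⟩
    refine ⟨ρ * π, mul_mem hρ hπ, fun j => ?_⟩
    rw [hf', hg, mul_inv_rev, Equiv.Perm.mul_apply]
  · rintro ⟨ρ, hρ, hf'⟩
    refine ⟨ρ * π⁻¹, mul_mem hρ (inv_mem hπ), fun j => ?_⟩
    simp only [hf', hg, mul_inv_rev, inv_inv, Equiv.Perm.mul_apply, Equiv.Perm.coe_inv,
      Equiv.symm_apply_apply]

lemma permOrbit_eq_iff {f g : Fin k → X} : permOrbit G f = permOrbit G g ↔ g ∈ permOrbit G f :=
  ⟨fun h => h ▸ mem_permOrbit_self G g, fun h => (permOrbit_eq_of_mem G h).symm⟩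

lemma comp_mem_permOrbit_comp_iff {Y : Type*} {u : X → Y} (hu : Function.Injective u)
    {f g : Fin k → X} : u ∘ g ∈ permOrbit G (u ∘ f) ↔ g ∈ permOrbit G f := by
  simp only [permOrbit, Set.mem_ofPred_eq, Function.comp_apply, hu.eq_iff]

lemma forall_mem_of_mem_permOrbit {S : Set X} {f g : Fin k → X} (hf : ∀ j, f j ∈ S)
    (hg : g ∈ permOrbit G f) (j : Fin k) : g j ∈ S := by
  obtain ⟨π, -, hg⟩ := hg
  exact hg j ▸ hf _

end Orbits

section WreathCell

variable {Ω : Type*} {k : ℕ} (G : Subgroup (Equiv.Perm (Fin k))) {S : Set (Set (Set Ω))}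

def wreathCell (α : Fin k → Set (Set Ω)) : Set (Set (Ω × Fin k)) :=
  {s | ∃ π ∈ G, ∀ j, fiber s j ∈ α (π⁻¹ j)}

lemma mem_wreathCell_iff {α : Fin k → Set (Set Ω)} {s : Set (Ω × Fin k)} :
    s ∈ wreathCell G α ↔ ∃ α' ∈ permOrbit G α, ∀ j, fiber s j ∈ α' j :=
  ⟨fun ⟨π, hπ, hs⟩ => ⟨_, ⟨π, hπ, fun _ => rfl⟩, hs⟩,
    fun ⟨_, ⟨π, hπ, hα'⟩, hs⟩ => ⟨π, hπ, fun j => hα' j ▸ hs j⟩⟩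

lemma mem_wreathCell_iff_mem_permOrbit (hS : Setoid.IsPartition S) {α β : Fin k → Set (Set Ω)}
    (hα : ∀ j, α j ∈ S) (hβ : ∀ j, β j ∈ S) {s : Set (Ω × Fin k)} (hs : ∀ j, fiber s j ∈ β j) :
    s ∈ wreathCell G α ↔ β ∈ permOrbit G α := by
  rw [mem_wreathCell_iff]
  refine ⟨fun ⟨α', hα', hsα'⟩ => ?_, fun h => ⟨β, h, hs⟩⟩
  convert hα'
  funext j
  exact Setoid.eq_of_mem_eqv_class hS.2 (hβ j) (hs j)
    (forall_mem_of_mem_permOrbit G hα hα' j) (hsα' j)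

lemma wreathCell_eq_iff (hS : Setoid.IsPartition S) {α β : Fin k → Set (Set Ω)}
    (hα : ∀ j, α j ∈ S) (hβ : ∀ j, β j ∈ S) :
    wreathCell G α = wreathCell G β ↔ β ∈ permOrbit G α := by
  refine ⟨fun h => ?_, fun h => ?_⟩
  · obtain ⟨s, hs⟩ := exists_forall_fiber_mem fun j => Setoid.nonempty_of_mem_partition hS (hβ j)
    have hsβ : s ∈ wreathCell G β := mem_wreathCell_iff G |>.2 ⟨β, mem_permOrbit_self G β, hs⟩
    exact (mem_wreathCell_iff_mem_permOrbit G hS hα hβ hs).1 (h ▸ hsβ)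
  · ext s
    simp only [mem_wreathCell_iff, permOrbit_eq_of_mem G h]

lemma preimage_prodCongr_mem_wreathCell_iff {ρ : Equiv.Perm (Fin k)} (hρ : ρ ∈ G)
    (α : Fin k → Set (Set Ω)) (s : Set (Ω × Fin k)) :
    (Equiv.refl Ω).prodCongr ρ ⁻¹' s ∈ wreathCell G α ↔ s ∈ wreathCell G α := by
  constructor
  · rintro ⟨π, hπ, hs⟩
    refine ⟨ρ * π, mul_mem hρ hπ, fun j => ?_⟩
    have h := hs (ρ⁻¹ j)
    rw [fiber_preimage_prodCongr] at h
    simpa only [mul_inv_rev, Equiv.Perm.mul_apply, Equiv.Perm.coe_inv, Equiv.apply_symm_apply]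
      using h
  · rintro ⟨π, hπ, hs⟩
    refine ⟨ρ⁻¹ * π, mul_mem (inv_mem hρ) hπ, fun j => ?_⟩
    rw [fiber_preimage_prodCongr, mul_inv_rev, inv_inv, Equiv.Perm.mul_apply]
    exact hs (ρ j)

lemma exists_forall_fiber_preimage_prodCongr_mem {α : Fin k → Set (Set Ω)}
    {s : Set (Ω × Fin k)} (hs : s ∈ wreathCell G α) :
    ∃ ρ ∈ G, ∀ j, fiber ((Equiv.refl Ω).prodCongr ρ ⁻¹' s) j ∈ α j := by
  obtain ⟨π, hπ, hs⟩ := hs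
  refine ⟨π, hπ, fun j => ?_⟩
  have h := hs (π j)
  rwa [Equiv.Perm.coe_inv, Equiv.symm_apply_apply] at h

end WreathCell

section Profiles

variable {Ω : Type*} {k : ℕ} (G : Subgroup (Equiv.Perm (Fin k))) {S : Set (Set (Set Ω))}

abbrev Profile (Ω : Type*) (k : ℕ) :=
  (Fin k → Set (Set Ω)) × (Fin k → Set (Set Ω)) × (Fin k → TripleType)

noncomputable def profile (hS : Setoid.IsPartition S) (a : Set (Ω × Fin k))
    (p : Set (Ω × Fin k) × Set (Ω × Fin k)) : Profile Ω k :=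
  (fun j => cellOf hS (fiber p.1 j), fun j => cellOf hS (fiber p.2 j),
    fun j => tripleType (fiber a j) (fiber p.1 j) (fiber p.2 j))

-- The triangle condition holds for every profile that occurs, since the fibers of a triangle are
-- triangles; it is what lets the regularity of `S` apply to each factor of the product.
def IsFeasibleProfile (β γ : Fin k → Set (Set Ω)) (τ : TripleType) (P : Profile Ω k) : Prop :=
  P.1 ∈ permOrbit G β ∧ P.2.1 ∈ permOrbit G γ ∧ ∑ j, P.2.2 j = τ ∧
    ∀ j, ∃ x y z : Set Ω, IsTriangle x y z ∧ tripleType x y z = P.2.2 j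

lemma mem_and_profile_eq_iff [Finite Ω] (hS : Setoid.IsPartition S) {β γ : Fin k → Set (Set Ω)}
    (hβ : ∀ j, β j ∈ S) (hγ : ∀ j, γ j ∈ S) {t₁ t₂ t₃ : Set (Ω × Fin k)}
    (ht : IsTriangle t₁ t₂ t₃) (a : Set (Ω × Fin k)) (P : Profile Ω k)
    (p : Set (Ω × Fin k) × Set (Ω × Fin k)) :
    (p.1 ∈ wreathCell G β ∧ p.2 ∈ wreathCell G γ ∧ tripleType a p.1 p.2 = tripleType t₁ t₂ t₃) ∧
        profile hS a p = P ↔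
      IsFeasibleProfile G β γ (tripleType t₁ t₂ t₃) P ∧
        ∀ j, fiber p.1 j ∈ P.1 j ∧ fiber p.2 j ∈ P.2.1 j ∧
          tripleType (fiber a j) (fiber p.1 j) (fiber p.2 j) = P.2.2 j := by
  constructor
  · rintro ⟨⟨hb, hc, htype⟩, rfl⟩
    have hcells : ∀ s : Set (Ω × Fin k), ∀ j, cellOf hS (fiber s j) ∈ S :=
      fun s j => cellOf_mem hS _
    refine ⟨⟨?_, ?_, ?_, fun j => ⟨_, _, _, (ht.of_tripleType_eq htype).fiber j, rfl⟩⟩,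
      fun j => ⟨mem_cellOf hS _, mem_cellOf hS _, rfl⟩⟩
    · exact (mem_wreathCell_iff_mem_permOrbit G hS hβ (hcells _) fun j => mem_cellOf hS _).1 hb
    · exact (mem_wreathCell_iff_mem_permOrbit G hS hγ (hcells _) fun j => mem_cellOf hS _).1 hc
    · exact (tripleType_eq_sum_fiber a p.1 p.2).symm.trans htype
  · rintro ⟨⟨hβP, hγP, hsum, -⟩, hp⟩
    have hP₁ := forall_mem_of_mem_permOrbit G hβ hβP
    have hP₂ := forall_mem_of_mem_permOrbit G hγ hγP
    refine ⟨⟨(mem_wreathCell_iff_mem_permOrbit G hS hβ hP₁ fun j => (hp j).1).2 hβP,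
      (mem_wreathCell_iff_mem_permOrbit G hS hγ hP₂ fun j => (hp j).2.1).2 hγP, ?_⟩, ?_⟩
    · rw [tripleType_eq_sum_fiber, ← hsum]
      exact Finset.sum_congr rfl fun j _ => (hp j).2.2
    · refine Prod.ext (funext fun j => ?_) (Prod.ext (funext fun j => ?_) (funext fun j => ?_))
      · exact (eq_cellOf hS (hP₁ j) (hp j).1).symm
      · exact (eq_cellOf hS (hP₂ j) (hp j).2.1).symm
      · exact (hp j).2.2

lemma typeCount_wreathCell_eq_finsum [Finite Ω] (hS : Setoid.IsPartition S)
    {β γ : Fin k → Set (Set Ω)} (hβ : ∀ j, β j ∈ S) (hγ : ∀ j, γ j ∈ S)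
    {t₁ t₂ t₃ : Set (Ω × Fin k)} (ht : IsTriangle t₁ t₂ t₃) (a : Set (Ω × Fin k)) :
    typeCount (wreathCell G β) (wreathCell G γ) a (tripleType t₁ t₂ t₃) =
      ∑ᶠ P ∈ {P | IsFeasibleProfile G β γ (tripleType t₁ t₂ t₃) P},
        ∏ j, typeCount (P.1 j) (P.2.1 j) (fiber a j) (P.2.2 j) := by
  rw [typeCount, ncard_eq_finsum_ncard_inter_preimage (Set.toFinite _) (profile hS a),
    finsum_mem_def]
  refine finsum_congr fun P => ?_
  simp only [Set.inter_def, Set.mem_preimage, Set.mem_singleton_iff, Set.mem_ofPred_eq,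
    mem_and_profile_eq_iff G hS hβ hγ ht a P]
  by_cases hP : IsFeasibleProfile G β γ (tripleType t₁ t₂ t₃) P
  · have hP' : P ∈ {P | IsFeasibleProfile G β γ (tripleType t₁ t₂ t₃) P} := hP
    simp only [hP, true_and, Set.indicator_of_mem hP']
    exact ncard_setOf_forall_fiber fun j q =>
      q.1 ∈ P.1 j ∧ q.2 ∈ P.2.1 j ∧ tripleType (fiber a j) q.1 q.2 = P.2.2 j
  · simp [hP]

lemma typeCount_wreathCell_eq_of_forall_fiber_mem [Finite Ω] (hS : Setoid.IsPartition S)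
    (hreg : IsTypeRegular S) {α β γ : Fin k → Set (Set Ω)} (hα : ∀ j, α j ∈ S)
    (hβ : ∀ j, β j ∈ S) (hγ : ∀ j, γ j ∈ S) {a a' : Set (Ω × Fin k)}
    (ha : ∀ j, fiber a j ∈ α j) (ha' : ∀ j, fiber a' j ∈ α j)
    {t₁ t₂ t₃ : Set (Ω × Fin k)} (ht : IsTriangle t₁ t₂ t₃) :
    typeCount (wreathCell G β) (wreathCell G γ) a (tripleType t₁ t₂ t₃) =
      typeCount (wreathCell G β) (wreathCell G γ) a' (tripleType t₁ t₂ t₃) := by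
  rw [typeCount_wreathCell_eq_finsum G hS hβ hγ ht, typeCount_wreathCell_eq_finsum G hS hβ hγ ht]
  refine finsum_mem_congr rfl fun P hP => Finset.prod_congr rfl fun j _ => ?_
  obtain ⟨hβP, hγP, -, htriangles⟩ := hP
  obtain ⟨x, y, z, hxyz, hP⟩ := htriangles j
  rw [← hP]
  exact hreg _ (hα j) _ (forall_mem_of_mem_permOrbit G hβ hβP j) _
    (forall_mem_of_mem_permOrbit G hγ hγP j) _ (ha j) _ (ha' j) x y z hxyz

end Profiles

section Wreath

variable {Ω : Type*} {k : ℕ} (G : Subgroup (Equiv.Perm (Fin k))) {S : Set (Set (Set Ω))}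

lemma wreath_eq_setOf_wreathCell :
    wreath S G = {c | ∃ α : Fin k → Set (Set Ω), (∀ j, α j ∈ S) ∧ c = wreathCell G α} := rfl

lemma isPartition_wreath (hS : Setoid.IsPartition S) : Setoid.IsPartition (wreath S G) := by
  refine ⟨?_, fun s => ?_⟩
  · rintro ⟨α, hα, hempty⟩
    obtain ⟨s, hs⟩ :=
      exists_forall_fiber_mem fun j => Setoid.nonempty_of_mem_partition hS (hα j)
    have hsα : s ∈ wreathCell G α := ⟨1, one_mem G, hs⟩
    exact Set.notMem_empty s (hempty ▸ hsα)
  · have hcells : ∀ j, cellOf hS (fiber s j) ∈ S := fun j => cellOf_mem hS _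
    refine ⟨wreathCell G fun j => cellOf hS (fiber s j), ⟨⟨_, hcells, rfl⟩,
      ⟨1, one_mem G, fun j => mem_cellOf hS _⟩⟩, ?_⟩
    rintro _ ⟨⟨α, hα, rfl⟩, hsα⟩
    refine (wreathCell_eq_iff G hS hα hcells).2 ?_
    exact (mem_wreathCell_iff_mem_permOrbit G hS hα hcells fun j => mem_cellOf hS _).1 hsα

lemma isCardHomogeneous_wreath [Finite Ω] (hS : IsCardHomogeneous S) :
    IsCardHomogeneous (wreath S G) := by
  rintro _ ⟨α, hα, rfl⟩ a ha a' ha'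
  obtain ⟨ρ, -, hρa⟩ := exists_forall_fiber_preimage_prodCongr_mem G ha
  obtain ⟨ρ', -, hρa'⟩ := exists_forall_fiber_preimage_prodCongr_mem G ha'
  rw [← ncard_preimage_equiv ((Equiv.refl Ω).prodCongr ρ) a,
    ← ncard_preimage_equiv ((Equiv.refl Ω).prodCongr ρ') a',
    ncard_eq_sum_ncard_fiber, ncard_eq_sum_ncard_fiber]
  exact Finset.sum_congr rfl fun j _ => hS _ (hα j) _ (hρa j) _ (hρa' j)

lemma isTypeRegular_wreath [Finite Ω] (hS : Setoid.IsPartition S) (hreg : IsTypeRegular S) :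
    IsTypeRegular (wreath S G) := by
  rw [IsTypeRegular, wreath_eq_setOf_wreathCell]
  rintro _ ⟨α, hα, rfl⟩ _ ⟨β, hβ, rfl⟩ _ ⟨γ, hγ, rfl⟩ a ha a' ha' t₁ t₂ t₃ ht
  obtain ⟨ρ, hρ, hρa⟩ := exists_forall_fiber_preimage_prodCongr_mem G ha
  obtain ⟨ρ', hρ', hρa'⟩ := exists_forall_fiber_preimage_prodCongr_mem G ha'
  have hinv : ∀ {σ}, σ ∈ G → ∀ (s : Set (Ω × Fin k)) τ,
      typeCount (wreathCell G β) (wreathCell G γ) ((Equiv.refl Ω).prodCongr σ ⁻¹' s) τ =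
        typeCount (wreathCell G β) (wreathCell G γ) s τ := fun hσ =>
    typeCount_preimage_equiv _ (preimage_prodCongr_mem_wreathCell_iff G hσ β)
      (preimage_prodCongr_mem_wreathCell_iff G hσ γ)
  rw [← hinv hρ a, ← hinv hρ' a']
  exact typeCount_wreathCell_eq_of_forall_fiber_mem G hS hreg hα hβ hγ hρa hρa' ht

lemma ncard_wreath [Finite Ω] (hS : Setoid.IsPartition S) :
    (wreath S G).ncard = {O | ∃ f : Fin k → Fin S.ncard, O = permOrbit G f}.ncard := by
  let e : Fin S.ncard ≃ S := (Finite.equivFinOfCardEq (Nat.card_coe_set_eq S)).symm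
  have hwreath : wreath S G = Set.range fun f : Fin k → Fin S.ncard =>
      wreathCell G fun j => (e (f j) : Set (Set Ω)) := by
    ext c
    constructor
    · rintro ⟨α, hα, rfl⟩
      exact ⟨fun j => e.symm ⟨α j, hα j⟩, by simp only [Equiv.apply_symm_apply]; rfl⟩
    · rintro ⟨f, rfl⟩
      exact ⟨_, fun j => (e (f j)).2, rfl⟩
  have horbits : {O | ∃ f : Fin k → Fin S.ncard, O = permOrbit G f} = Set.range (permOrbit G) :=
    Set.ext fun O => exists_congr fun f => eq_comm
  rw [hwreath, horbits]
  refine ncard_range_eq_of_eq_iff fun f g => ?_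
  rw [wreathCell_eq_iff G hS (fun j => (e (f j)).2) (fun j => (e (g j)).2), permOrbit_eq_iff]
  exact comp_mem_permOrbit_comp_iff G (u := Subtype.val ∘ e)
    (Subtype.val_injective.comp e.injective)

end Wreath

theorem stmt10_general {Ω : Type*} [Finite Ω] (S : Set (Set (Set Ω))) (hS : IsSAS S)
    (k : ℕ) (G : Subgroup (Equiv.Perm (Fin k))) :
    IsSAS (wreath S G) ∧
    (wreath S G).ncard =
      {O : Set (Fin k → Fin S.ncard) | ∃ f : Fin k → Fin S.ncard,
        O = {f' : Fin k → Fin S.ncard | ∃ π ∈ G, ∀ j, f' j = f (π⁻¹ j)}}.ncard :=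
  ⟨⟨isPartition_wreath G hS.1, isCardHomogeneous_wreath G hS.2.1,
    isTypeRegular_wreath G hS.1 hS.2.2⟩, ncard_wreath G hS.1⟩

theorem stmt10 {Ω : Type*} [Finite Ω] (S : Set (Set (Set Ω))) (hS : IsSAS S)
    (k : ℕ) (hk : 1 ≤ k) (G : Subgroup (Equiv.Perm (Fin k))) :
    IsSAS (wreath S G) ∧
    (wreath S G).ncard =
      {O : Set (Fin k → Fin S.ncard) | ∃ f : Fin k → Fin S.ncard,
        O = {f' : Fin k → Fin S.ncard | ∃ π ∈ G, ∀ j, f' j = f (π⁻¹ j)}}.ncard :=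
  stmt10_general S hS k G

end Paper
end
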